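/- arXiv:2011.13016 — 4 statements merged into one kernel-verified Lean document; each statement's English description precedes it below -/
import Mathlib

section
/- Let m be a positive integer and δ ∈ {1,…,2^m−2}. Suppose l ∈ {1,…,m} and i ∈ {0,…,m−1} are such that the binary digits of δ at the positions (i+k) mod m, for k = 0,…,l−1, are all equal to one another. Then gcd(δ, 2^m − 1) ≤ 2^{m−l} − 1. -/
/-- If the first `m` binary digits of `δ ∈ {1, …, 2^m - 2}`, written around a circle,
contain a block of `l` consecutive equal digits (starting at position `i`, read cyclically),
then `gcd(δ, 2^m - 1) ≤ 2^{m-l} - 1`. -/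
theorem gcd_le_of_cyclic_equal_digit_block
    (m : ℕ) (hm : 0 < m) (δ : ℕ) (hδ1 : 1 ≤ δ) (hδ2 : δ ≤ 2 ^ m - 2)
    (l i : ℕ) (hl1 : 1 ≤ l) (hl2 : l ≤ m) (hi : i ≤ m - 1)
    (heq : ∀ k₁ k₂ : ℕ, k₁ < l → k₂ < l →
      δ.testBit ((i + k₁) % m) = δ.testBit ((i + k₂) % m)) :
    Nat.gcd δ (2 ^ m - 1) ≤ 2 ^ (m - l) - 1 := by
  have h2m : 2 ≤ 2 ^ m := by
    calc 2 = 2 ^ 1 := rfl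
    _ ≤ 2 ^ m := Nat.pow_le_pow_right (by norm_num) hm
  have hδm : δ < 2 ^ m := by omega
  -- the rotation amount
  set p := (i + l) % m with hp
  have hpm : p < m := Nat.mod_lt _ hm
  set j := (m - p) % m with hj
  have hjm : j < m := Nat.mod_lt _ hm
  have hmj : (m - j) % m = (i + l) % m := by
    rcases Nat.eq_zero_or_pos p with h0 | h0
    · have : j = 0 := by rw [hj, h0, Nat.sub_zero, Nat.mod_self]
      rw [this, Nat.sub_zero, Nat.mod_self, ← hp, h0]
    · have hjeq : j = m - p := by
        rw [hj]; exact Nat.mod_eq_of_lt (by omega)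
      have : m - j = p := by omega
      rw [this, ← hp]; exact Nat.mod_eq_of_lt hpm
  set r := δ % 2 ^ (m - j) with hr
  set q := δ / 2 ^ (m - j) with hqdef
  have hδeq : 2 ^ (m - j) * q + r = δ := Nat.div_add_mod δ _
  have hpow : 2 ^ j * 2 ^ (m - j) = 2 ^ m := by
    rw [← pow_add]; congr 1; omega
  have hq : q < 2 ^ j := by
    rw [hqdef, Nat.div_lt_iff_lt_mul (Nat.two_pow_pos _)]
    calc δ < 2 ^ m := hδm
    _ = 2 ^ j * 2 ^ (m - j) := hpow.symm
  have hrlt : r < 2 ^ (m - j) := Nat.mod_lt _ (Nat.two_pow_pos _)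
  set e := 2 ^ j * r + q with he
  clear_value p j
  clear_value r q
  clear_value e
  -- e is congruent to 2^j * δ mod 2^m - 1
  have h1 : 2 ^ j * δ = 2 ^ m * q + 2 ^ j * r := by
    conv_lhs => rw [← hδeq]
    rw [Nat.mul_add, ← Nat.mul_assoc, hpow]
  have key : e + q * (2 ^ m - 1) = 2 ^ j * δ := by
    have hmul : q * (2 ^ m - 1) = 2 ^ m * q - q := by
      rw [Nat.mul_sub, Nat.mul_one, Nat.mul_comm q (2 ^ m)]
    have hle : q ≤ 2 ^ m * q := Nat.le_mul_of_pos_left q (Nat.two_pow_pos m)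
    rw [he, hmul, h1]
    omega
  set d := Nat.gcd δ (2 ^ m - 1) with hd
  have hde : d ∣ e := by
    have hdδ : d ∣ 2 ^ j * δ := Dvd.dvd.mul_left (Nat.gcd_dvd_left _ _) _
    have hdq : d ∣ q * (2 ^ m - 1) := Dvd.dvd.mul_left (Nat.gcd_dvd_right _ _) _
    have h : d ∣ e + q * (2 ^ m - 1) := key ▸ hdδ
    simpa using Nat.dvd_sub h hdq
  -- bits of e are a cyclic rotation of bits of δ
  have hbit : ∀ t, t < m → e.testBit t = δ.testBit ((t + (m - j)) % m) := by
    intro t ht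
    rw [he, Nat.testBit_two_pow_mul_add r hq t]
    by_cases htj : t < j
    · simp only [htj, if_true]
      have h2 : (t + (m - j)) % m = m - j + t := by
        rw [Nat.add_comm]; exact Nat.mod_eq_of_lt (by omega)
      rw [h2, hqdef, ← Nat.shiftRight_eq_div_pow, Nat.testBit_shiftRight]
    · simp only [htj, if_false]
      have h2 : (t + (m - j)) % m = t - j := by
        have h3 : t + (m - j) = m + (t - j) := by omega
        rw [h3, Nat.add_mod_left]
        exact Nat.mod_eq_of_lt (by omega)
      rw [h2, hr, Nat.testBit_mod_two_pow]
      have : t - j < m - j := by omega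
      simp [this]
  have he2m : e < 2 ^ m := by
    calc e = 2 ^ j * r + q := he
    _ < 2 ^ j * r + 2 ^ j := Nat.add_lt_add_left hq _
    _ = 2 ^ j * (r + 1) := by ring
    _ ≤ 2 ^ j * 2 ^ (m - j) := Nat.mul_le_mul_left _ (by omega)
    _ = 2 ^ m := hpow
  -- the top l bits of e are all equal to b := δ.testBit (i % m)
  have htop : ∀ k, k < l → e.testBit (m - l + k) = δ.testBit (i % m) := by
    intro k hk
    have hlt : m - l + k < m := by omega
    rw [hbit _ hlt]
    have hmodeq : ((m - l + k) + (m - j)) % m = (i + k) % m := by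
      rw [Nat.add_mod, hmj, ← Nat.add_mod]
      have : (m - l + k) + (i + l) = m + (i + k) := by omega
      rw [this, Nat.add_mod_left]
    rw [hmodeq]
    have := heq k 0 hk hl1
    rwa [Nat.add_zero] at this
  have hene : e ≠ 0 := by
    intro h0
    rw [he] at h0
    have hrA : r ≤ 2 ^ j * r := Nat.le_mul_of_pos_left r (Nat.two_pow_pos j)
    have hq0 : q = 0 := by omega
    have hr0 : r = 0 := by omega
    rw [hq0, hr0, Nat.mul_zero, Nat.add_zero] at hδeq
    omega
  have hml : 1 ≤ 2 ^ (m - l) := Nat.one_le_two_pow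
  by_cases hb : δ.testBit (i % m) = false
  · -- all-zeros block: e < 2^(m-l)
    have hetop : ∀ t, m - l ≤ t → e.testBit t = false := by
      intro t ht
      by_cases htm : t < m
      · have hk : t - (m - l) < l := by omega
        have := htop (t - (m - l)) hk
        rw [show m - l + (t - (m - l)) = t from by omega] at this
        rw [this, hb]
      · exact Nat.testBit_lt_two_pow (lt_of_lt_of_le he2m
          (Nat.pow_le_pow_right (by norm_num) (by omega)))
    have helt : e < 2 ^ (m - l) := Nat.lt_pow_two_of_testBit e (fun t ht => hetop t ht)
    have hdle : d ≤ e := Nat.le_of_dvd (Nat.pos_of_ne_zero hene) hde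
    omega
  · -- all-ones block: e ≥ 2^m - 2^(m-l), bound the complement
    have hbt : δ.testBit (i % m) = true := by
      cases h : δ.testBit (i % m) <;> simp_all
    have hetop : ∀ k, k < l → e.testBit (m - l + k) = true := by
      intro k hk; rw [htop k hk, hbt]
    set g := e / 2 ^ (m - l) with hg
    have hgbit : ∀ s, g.testBit s = e.testBit (m - l + s) := by
      intro s
      rw [hg, ← Nat.shiftRight_eq_div_pow, Nat.testBit_shiftRight]
    have hgmod : g % 2 ^ l = 2 ^ l - 1 := by
      apply Nat.eq_of_testBit_eq
      intro t
      rw [Nat.testBit_mod_two_pow, Nat.testBit_two_pow_sub_one]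
      by_cases h : t < l
      · rw [hgbit, hetop t h]
        simp [h]
      · simp [h]
    have hgge : 2 ^ l - 1 ≤ g := hgmod ▸ Nat.mod_le g (2 ^ l)
    have h6 : 2 ^ (m - l) * (2 ^ l - 1) ≤ e := by
      calc 2 ^ (m - l) * (2 ^ l - 1) ≤ 2 ^ (m - l) * g := Nat.mul_le_mul_left _ hgge
      _ = g * 2 ^ (m - l) := Nat.mul_comm _ _
      _ ≤ e := Nat.div_mul_le_self e _
    have hpow2 : 2 ^ (m - l) * 2 ^ l = 2 ^ m := by
      rw [← pow_add]; congr 1; omega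
    have h8 : 2 ^ (m - l) * (2 ^ l - 1) + 2 ^ (m - l) = 2 ^ m := by
      rw [← Nat.mul_succ, Nat.succ_eq_add_one, Nat.sub_add_cancel Nat.one_le_two_pow]
      exact hpow2
    -- e ≠ 2^m - 1
    have hne : e ≠ 2 ^ m - 1 := by
      intro hcontra
      have hall : ∀ s, s < m → δ.testBit s = true := by
        intro s hs
        have ht : (s + j) % m < m := Nat.mod_lt _ hm
        have := hbit _ ht
        rw [hcontra, Nat.testBit_two_pow_sub_one] at this
        simp only [ht] at this
        simp at this
        have h9 : (s + j + (m - j)) % m = s := by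
          rw [show s + j + (m - j) = m + s from by omega, Nat.add_mod_left]
          exact Nat.mod_eq_of_lt hs
        rw [h9] at this
        exact this
      have : 2 ^ m - 1 ≤ δ := by
        apply Nat.le_of_testBit
        intro t htb
        rw [Nat.testBit_two_pow_sub_one] at htb
        exact hall t (by simpa using htb)
      omega
    have hdc : d ∣ 2 ^ m - 1 - e := Nat.dvd_sub (Nat.gcd_dvd_right _ _) hde
    have hcpos : 0 < 2 ^ m - 1 - e := by omega
    have hdle : d ≤ 2 ^ m - 1 - e := Nat.le_of_dvd hcpos hdc
    omega
end

section
/- Let m and k be positive integers and let δ ∈ {1,…,2^m−2} satisfy β(δ) ≤ k, where β(δ) denotes the number of maximal blocks of consecutive 1's in the binary representation of δ. Then gcd(δ, 2^m − 1) ≤ 2^{(1 − 1/(2k))·m} − 1, where the right-hand side is interpreted as a real number (real exponentiation). -/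
/-!
Read `δ` as a cyclic binary word of length `m`. It has at most `k` descents, hence at most `2k`
changes of bit, so it contains a constant run of `⌈m / (2k)⌉` bits. Replacing `δ` by
`2^m - 1 - δ` if necessary (this does not change the gcd with `2^m - 1`), the run consists of
zeros. Multiplication by a power of `2` modulo `2^m - 1` rotates the word cyclically; rotating
the zero run to the top yields a nonzero multiple of the gcd below `2^(m - ⌈m / (2k)⌉)`.
-/

open Finset

noncomputable def oneBlocks (k : ℕ) : ℕ :=
  {i : ℕ | k.testBit i = true ∧ k.testBit (i + 1) = false}.ncard

def rotateBitsRight (m u n : ℕ) : ℕ := 2 ^ (m - u) * (n % 2 ^ u) + n / 2 ^ u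

section Rotation

variable {m u n : ℕ}

theorem testBit_rotateBitsRight (hn : n < 2 ^ m) (hu : u ≤ m) {j : ℕ} (hj : j < m) :
    (rotateBitsRight m u n).testBit j = n.testBit ((j + u) % m) := by
  have hhigh : n / 2 ^ u < 2 ^ (m - u) :=
    Nat.div_lt_of_lt_mul (by rwa [← pow_add, Nat.add_sub_cancel' hu])
  rw [rotateBitsRight, Nat.testBit_two_pow_mul_add _ hhigh]
  split_ifs with hju
  · rw [show (j + u) % m = u + j by rw [Nat.mod_eq_of_lt (by omega)]; omega,
      ← Nat.shiftRight_eq_div_pow, Nat.testBit_shiftRight]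
  · rw [show (j + u) % m = j - (m - u) by
        rw [Nat.mod_eq_sub_mod (by omega), Nat.mod_eq_of_lt (by omega)]; omega,
      Nat.testBit_mod_two_pow, decide_eq_true (by omega), Bool.true_and]

theorem rotateBitsRight_lt (hn : n < 2 ^ m) (hu : u ≤ m) : rotateBitsRight m u n < 2 ^ m := by
  have hlow : n % 2 ^ u + 1 ≤ 2 ^ u := Nat.mod_lt _ (Nat.two_pow_pos u)
  have := Nat.mul_le_mul_left (2 ^ (m - u)) hlow
  rw [mul_add, mul_one, ← pow_add, Nat.sub_add_cancel hu] at this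
  have hhigh : n / 2 ^ u < 2 ^ (m - u) :=
    Nat.div_lt_of_lt_mul (by rwa [← pow_add, Nat.add_sub_cancel' hu])
  unfold rotateBitsRight
  omega

theorem rotateBitsRight_add_mul (hu : u ≤ m) :
    rotateBitsRight m u n + n / 2 ^ u * (2 ^ m - 1) = n * 2 ^ (m - u) := by
  have hsplit : (2 : ℤ) ^ m = 2 ^ (m - u) * 2 ^ u := by rw [← pow_add, Nat.sub_add_cancel hu]
  have hdiv := Nat.div_add_mod n (2 ^ u)
  have hone : 1 ≤ 2 ^ m := Nat.one_le_two_pow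
  unfold rotateBitsRight
  zify [hone] at hdiv ⊢
  linear_combination (2 : ℤ) ^ (m - u) * hdiv + (n / 2 ^ u : ℤ) * hsplit

theorem rotateBitsRight_pos (hn : 0 < n) : 0 < rotateBitsRight m u n := by
  have hdiv := Nat.div_add_mod n (2 ^ u)
  unfold rotateBitsRight
  by_contra h
  simp only [not_lt, Nat.le_zero, Nat.add_eq_zero_iff, Nat.mul_eq_zero, pow_eq_zero_iff',
    OfNat.ofNat_ne_zero, false_and, false_or] at h
  rw [h.1, h.2, mul_zero, zero_add] at hdiv
  omega

end Rotation

theorem card_filter_ne_comp_eq_two_mul {ι : Type*} [Fintype ι] (σ : Equiv.Perm ι)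
    (w : ι → Bool) :
    #{x | w x ≠ w (σ x)} = 2 * #{x | w x ∧ ¬ w (σ x)} := by
  -- a cyclic word has as many ascents as descents
  have hpoint : ∀ x, ((if w x ≠ w (σ x) then 1 else 0) + if w x then 1 else 0) =
      2 * (if w x ∧ ¬ w (σ x) then 1 else 0) + if w (σ x) then 1 else 0 := by
    intro x
    cases w x <;> cases w (σ x) <;> rfl
  have hsum := Finset.sum_congr rfl fun x (_ : x ∈ (univ : Finset ι)) => hpoint x
  rw [sum_add_distrib, sum_add_distrib, Equiv.sum_comp σ (fun x => if w x then 1 else 0),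
    ← mul_sum, ← card_filter, ← card_filter, ← card_filter] at hsum
  omega

theorem exists_run_of_card_filter_ne_mul_lt {α : Type*} [DecidableEq α] {m L : ℕ} [NeZero m]
    (w : ZMod m → α) (h : #{x | w x ≠ w (x + 1)} * (L - 1) < m) :
    ∃ t, ∀ j < L, w (t + j) = w t := by
  -- a change at `x` spoils only the `L - 1` starting points `x - i` with `i < L - 1`
  set bad := ({x | w x ≠ w (x + 1)} : Finset (ZMod m)).biUnion
    fun x => (range (L - 1)).image fun i : ℕ => x - i
  have hbad : #bad < #(univ : Finset (ZMod m)) := by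
    refine lt_of_le_of_lt (card_biUnion_le_card_mul _ _ (L - 1) fun x _ => ?_) ?_
    · exact card_image_le.trans (card_range _).le
    · rwa [card_univ, ZMod.card]
  obtain ⟨t, -, ht⟩ := exists_mem_notMem_of_card_lt_card hbad
  refine ⟨t, fun j hj => ?_⟩
  induction j with
  | zero => simp
  | succ j ih =>
    rw [← ih (by omega)]
    by_contra hne
    refine ht (mem_biUnion.2 ⟨t + j, by simpa [add_assoc] using Ne.symm hne, ?_⟩)
    exact mem_image.2 ⟨j, mem_range.2 (by omega), by ring⟩

theorem card_filter_descents_le_oneBlocks {m δ : ℕ} [NeZero m] (hδ : δ < 2 ^ m) :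
    #{x : ZMod m | δ.testBit x.val ∧ ¬ δ.testBit (x + 1).val} ≤ oneBlocks δ := by
  have hhigh : ∀ i, m ≤ i → δ.testBit i = false := fun i hi =>
    Nat.testBit_lt_two_pow (hδ.trans_le (Nat.pow_le_pow_right two_pos hi))
  have hfin : {i | δ.testBit i = true ∧ δ.testBit (i + 1) = false}.Finite :=
    (Set.finite_lt_nat m).subset fun i hi => by
      by_contra him
      simp_all
  rw [oneBlocks, ← Set.ncard_coe_finset]
  refine Set.ncard_le_ncard_of_injOn ZMod.val (fun x hx => ?_) (ZMod.val_injective m).injOn hfin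
  simp only [coe_filter, mem_univ, true_and, Set.mem_ofPred_eq, Bool.not_eq_true] at hx ⊢
  rw [ZMod.val_add, ZMod.val_one_eq_one_mod, Nat.add_mod_mod] at hx
  refine ⟨hx.1, ?_⟩
  rcases Nat.lt_or_ge (x.val + 1) m with hlt | hge
  · exact Nat.mod_eq_of_lt hlt ▸ hx.2
  · exact hhigh _ hge

theorem exists_testBit_run_of_oneBlocks_le {m k L δ : ℕ} (hδ : δ < 2 ^ m)
    (hβ : oneBlocks δ ≤ k) (hL : 2 * k * (L - 1) < m) :
    ∃ t b, ∀ j < L, δ.testBit ((t + j) % m) = b := by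
  have : NeZero m := ⟨by rintro rfl; omega⟩
  have hchanges := card_filter_ne_comp_eq_two_mul (Equiv.addRight (1 : ZMod m)) (δ.testBit ·.val)
  simp only [Equiv.coe_addRight] at hchanges
  obtain ⟨t, ht⟩ := exists_run_of_card_filter_ne_mul_lt (fun x : ZMod m => δ.testBit x.val)
    (L := L) <| calc
      _ = 2 * #{x : ZMod m | δ.testBit x.val ∧ ¬ δ.testBit (x + 1).val} * (L - 1) :=
        congrArg (· * _) hchanges
      _ ≤ 2 * k * (L - 1) := by
        gcongr; exact (card_filter_descents_le_oneBlocks hδ).trans hβ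
      _ < m := hL
  exact ⟨t.val, δ.testBit t.val, fun j hj => by
    simpa [ZMod.val_add, ZMod.val_natCast] using ht j hj⟩

theorem le_two_pow_sub_one_of_dvd_of_testBit_run {m L d n t : ℕ} (hn0 : 0 < n) (hn : n < 2 ^ m)
    (hdn : d ∣ n) (hd : d ∣ 2 ^ m - 1) (hrun : ∀ j < L, n.testBit ((t + j) % m) = false) :
    d ≤ 2 ^ (m - L) - 1 := by
  have hm : 0 < m := Nat.pos_of_ne_zero fun h => by simp [h] at hn; omega
  set u := (t + L) % m
  have hu : u ≤ m := (Nat.mod_lt _ hm).le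
  have hρ : rotateBitsRight m u n < 2 ^ (m - L) := by
    refine Nat.lt_pow_two_of_testBit _ fun j hj => ?_
    rcases Nat.lt_or_ge j m with hjm | hjm
    · rw [testBit_rotateBitsRight hn hu hjm, show (j + u) % m = (t + (j + L - m)) % m by
        rw [Nat.add_mod_mod, show j + (t + L) = t + (j + L - m) + m by omega, Nat.add_mod_right]]
      exact hrun _ (by omega)
    · exact Nat.testBit_lt_two_pow
        ((rotateBitsRight_lt hn hu).trans_le (Nat.pow_le_pow_right two_pos hjm))
  have hdρ : d ∣ rotateBitsRight m u n :=
    (Nat.dvd_add_left (hd.mul_left _)).1 (rotateBitsRight_add_mul hu ▸ hdn.mul_right _)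
  have := Nat.le_of_dvd (rotateBitsRight_pos hn0) hdρ
  omega

theorem gcd_two_pow_sub_one_le_of_testBit_run {m L δ t : ℕ} {b : Bool} (hδ0 : 0 < δ)
    (hδ : δ < 2 ^ m - 1) (hrun : ∀ j < L, δ.testBit ((t + j) % m) = b) :
    δ.gcd (2 ^ m - 1) ≤ 2 ^ (m - L) - 1 := by
  have hdδ := Nat.gcd_dvd_left δ (2 ^ m - 1)
  have hd := Nat.gcd_dvd_right δ (2 ^ m - 1)
  cases b
  · exact le_two_pow_sub_one_of_dvd_of_testBit_run hδ0 (by omega) hdδ hd hrun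
  · refine le_two_pow_sub_one_of_dvd_of_testBit_run (n := 2 ^ m - 1 - δ) (t := t)
      (by omega) (by omega) (Nat.dvd_sub hd hdδ) hd fun j hj => ?_
    rw [show 2 ^ m - 1 - δ = 2 ^ m - (δ + 1) by omega, Nat.testBit_two_pow_sub_succ (by omega),
      hrun j hj, Bool.not_true, Bool.and_false]

theorem natCast_two_pow_sub_one_le_rpow {m k L : ℕ} (hk : 0 < k) (hLm : L ≤ m)
    (hmL : m ≤ L * (2 * k)) :
    ((2 ^ (m - L) - 1 : ℕ) : ℝ) ≤ (2 : ℝ) ^ ((1 - 1 / (2 * (k : ℝ))) * m) - 1 := by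
  have hexp : ((m - L : ℕ) : ℝ) ≤ (1 - 1 / (2 * (k : ℝ))) * m := by
    rw [Nat.cast_sub hLm, sub_mul, one_mul, div_mul_eq_mul_div, one_mul]
    have : (m : ℝ) / (2 * k) ≤ L := (div_le_iff₀ (by positivity)).2 (by exact_mod_cast hmL)
    linarith
  calc ((2 ^ (m - L) - 1 : ℕ) : ℝ) = (2 : ℝ) ^ ((m - L : ℕ) : ℝ) - 1 := by
        rw [Real.rpow_natCast, Nat.cast_sub Nat.one_le_two_pow]; push_cast; ring
    _ ≤ _ := by gcongr; norm_num

/-- If `δ ∈ {1, …, 2^m - 2}` has at most `k` maximal 1-blocks in its binary representation,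
then `gcd(δ, 2^m - 1) ≤ 2^{(1 - 1/(2k))·m} - 1` (real exponentiation). -/
theorem gcd_le_rpow_of_oneBlocks_le
    (m k : ℕ) (hm : 0 < m) (hk : 0 < k) (δ : ℕ) (hδ1 : 1 ≤ δ) (hδ2 : δ ≤ 2 ^ m - 2)
    (hβ : oneBlocks δ ≤ k) :
    (Nat.gcd δ (2 ^ m - 1) : ℝ) ≤
      (2 : ℝ) ^ ((1 - 1 / (2 * (k : ℝ))) * (m : ℝ)) - 1 := by
  -- the run length `L = (m - 1) / (2 * k) + 1` is `⌈m / (2 * k)⌉`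
  set L := (m - 1) / (2 * k) + 1 with hL
  have hLm : L ≤ m := by have := Nat.div_le_self (m - 1) (2 * k); omega
  have hrunLength : 2 * k * (L - 1) < m := by
    have := Nat.mul_div_le (m - 1) (2 * k)
    rw [hL, Nat.add_sub_cancel]; omega
  have hceil : m ≤ L * (2 * k) := by
    have := Nat.lt_mul_div_succ (m - 1) (show 0 < 2 * k by omega)
    rw [← hL] at this; rw [mul_comm]; omega
  obtain ⟨t, b, hrun⟩ := exists_testBit_run_of_oneBlocks_le (by omega) hβ hrunLength
  exact (Nat.cast_le.2 (gcd_two_pow_sub_one_le_of_testBit_run hδ1 (by omega) hrun)).trans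
    (natCast_two_pow_sub_one_le_rpow hk hLm hceil)
end

section
/- Let m, n be positive integers, let σ_1,…,σ_m be vectors in 𝔽₂ⁿ, and let π_{i,j} ∈ 𝔽₂ⁿ for 1 ≤ i < j ≤ m. Define a binary operation on the set 𝔽₂^m × 𝔽₂ⁿ by (u₁,v₁)·(u₂,v₂) := (u₁+u₂, v₁+v₂+Σ_{i=1}^{m} u_{1,i}·u_{2,i}·σ_i + Σ_{1≤i<j≤m} u_{1,j}·u_{2,i}·π_{i,j}), where second indices denote vector coordinates. Then this operation makes 𝔽₂^m × 𝔽₂ⁿ into a group whose identity element is (0,0), and in which the inverse of an element (u,v) is (u, v + Σ_{i=1}^{m} u_i·σ_i + Σ_{1≤i<j≤m} u_i·u_j·π_{i,j}). -/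
open Finset in
/-- The multiplication from Proposition 2.1(1) on `𝔽₂^m × 𝔽₂^n`, determined by the vectors
`σ i` (encoding squares of generators) and `π i j` for `i < j` (encoding commutators). -/
def higmanMul {m n : ℕ} (σ : Fin m → (Fin n → ZMod 2)) (π : Fin m → Fin m → (Fin n → ZMod 2))
    (a b : (Fin m → ZMod 2) × (Fin n → ZMod 2)) : (Fin m → ZMod 2) × (Fin n → ZMod 2) :=
  (a.1 + b.1,
    a.2 + b.2 + ∑ i : Fin m, (a.1 i * b.1 i) • σ i +
      ∑ q ∈ univ.filter (fun q : Fin m × Fin m => q.1 < q.2), (a.1 q.2 * b.1 q.1) • π q.1 q.2)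

open Finset in
/-- The inversion map from Proposition 2.1(1) on `𝔽₂^m × 𝔽₂^n`. -/
def higmanInv {m n : ℕ} (σ : Fin m → (Fin n → ZMod 2)) (π : Fin m → Fin m → (Fin n → ZMod 2))
    (a : (Fin m → ZMod 2) × (Fin n → ZMod 2)) : (Fin m → ZMod 2) × (Fin n → ZMod 2) :=
  (a.1,
    a.2 + ∑ i : Fin m, a.1 i • σ i +
      ∑ q ∈ univ.filter (fun q : Fin m × Fin m => q.1 < q.2), (a.1 q.1 * a.1 q.2) • π q.1 q.2)

/-- The operation `higmanMul` makes `𝔽₂^m × 𝔽₂^n` into a group with identity `(0, 0)` and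
with the inverse of `(u, v)` given by `higmanInv`:
`(u, v + Σᵢ uᵢ·σᵢ + Σ_{i<j} uᵢuⱼ·π_{i,j})`. -/
theorem higmanMul_group
    (m n : ℕ) (hm : 0 < m) (hn : 0 < n)
    (σ : Fin m → (Fin n → ZMod 2)) (π : Fin m → Fin m → (Fin n → ZMod 2)) :
    (∀ a b c : (Fin m → ZMod 2) × (Fin n → ZMod 2),
        higmanMul σ π (higmanMul σ π a b) c = higmanMul σ π a (higmanMul σ π b c)) ∧
    (∀ a : (Fin m → ZMod 2) × (Fin n → ZMod 2), higmanMul σ π (0, 0) a = a) ∧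
    (∀ a : (Fin m → ZMod 2) × (Fin n → ZMod 2), higmanMul σ π a (0, 0) = a) ∧
    (∀ a : (Fin m → ZMod 2) × (Fin n → ZMod 2), higmanMul σ π a (higmanInv σ π a) = (0, 0)) ∧
    (∀ a : (Fin m → ZMod 2) × (Fin n → ZMod 2), higmanMul σ π (higmanInv σ π a) a = (0, 0)) := by
  have hself : ∀ x : ZMod 2, x * x = x := by decide
  have haddself : ∀ {k : ℕ} (v : Fin k → ZMod 2), v + v = 0 := fun v => by
    funext i; exact CharTwo.add_self_eq_zero _
  refine ⟨?_, ?_, ?_, ?_, ?_⟩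
  · intro a b c
    simp only [higmanMul, Prod.mk.injEq, Pi.add_apply, add_mul, mul_add, add_smul,
      Finset.sum_add_distrib]
    exact ⟨add_assoc _ _ _, by abel⟩
  · intro a
    simp [higmanMul]
  · intro a
    simp [higmanMul]
  · intro a
    simp only [higmanMul, higmanInv, Prod.mk.injEq, hself]
    refine ⟨haddself _, ?_⟩
    have hcomm : ∀ i j : Fin m, a.1 j * a.1 i = a.1 i * a.1 j := fun i j => mul_comm _ _
    simp only [hcomm]
    have h1 : ∀ x : Fin m, a.1 x * a.1 x = a.1 x := fun x => hself _
    abel_nf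
    rw [show ∀ (x y z : Fin n → ZMod 2), (2:ℤ) • x + ((2:ℤ) • y + (2:ℤ) • z) = 0 from ?_]
    · intro x y z
      have : ∀ {k : ℕ} (w : Fin k → ZMod 2), (2:ℤ) • w = 0 := fun w => by
        rw [two_zsmul]; exact haddself w
      simp [this]
  · intro a
    simp only [higmanMul, higmanInv, Prod.mk.injEq, hself]
    refine ⟨haddself _, ?_⟩
    have hcomm : ∀ i j : Fin m, a.1 j * a.1 i = a.1 i * a.1 j := fun i j => mul_comm _ _
    simp only [hcomm]
    have h2 : ∀ {k : ℕ} (w : Fin k → ZMod 2), (2:ℤ) • w = 0 := fun w => by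
      rw [two_zsmul]; exact haddself w
    abel_nf
    simp [h2]
end

section
/- Let F be a finite field of characteristic 2 and let N be a positive integer. Let Sp_{2N}(F) denote the symplectic group of 2N×2N matrices over F, acting on the space of row vectors F^{2N} by right multiplication. Then for every nonzero vector x ∈ F^{2N}, a vector y ∈ F^{2N} is fixed by every element of the stabilizer of x in Sp_{2N}(F) if and only if y lies in the one-dimensional subspace F·x; that is, the set of common fixed points of the stabilizer of x in Sp_{2N}(F) equals F·x. -/
/-!
Write `ω(u, v) = u ⬝ᵥ J *ᵥ v`. For every `v` with `ω(x, v) = 0` the symplectic transvection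
`u ↦ u + ω(u, v) v` fixes `x`, and it fixes `y` only if `ω(y, v) = 0`. Hence the kernel of
`ω(x, ·)` lies in that of `ω(y, ·)`, so `ω(y, ·) = c ω(x, ·)` for some `c`, and `y = c x` because
`ω` is nondegenerate.
-/

open Matrix

theorem LinearMap.exists_smul_eq_of_ker_le {K E : Type*} [Field K] [AddCommGroup E] [Module K E]
    {f g : E →ₗ[K] K} (h : ker f ≤ ker g) : ∃ c : K, c • f = g := by
  have hg : g ∈ Submodule.span K (Set.range fun _ : Unit => f) :=
    mem_span_of_iInf_ker_le_ker (by simpa using h)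
  rwa [Set.range_const, Submodule.mem_span_singleton] at hg

theorem Matrix.exists_smul_eq_of_forall_dotProduct_eq_zero {K n : Type*} [Field K] [Fintype n]
    {x y : n → K} (h : ∀ v, x ⬝ᵥ v = 0 → y ⬝ᵥ v = 0) : ∃ c : K, c • x = y := by
  classical
  obtain ⟨c, hc⟩ := LinearMap.exists_smul_eq_of_ker_le (f := dotProductBilin K K x)
    (g := dotProductBilin K K y) fun v => h v
  exact ⟨c, funext fun i => by simpa using LinearMap.congr_fun hc (Pi.single i 1)⟩

theorem Matrix.SeparatingLeft.exists_smul_eq {K n : Type*} [Field K] [Fintype n]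
    {M : Matrix n n K} (hM : M.SeparatingLeft) {x y : n → K}
    (h : ∀ v, x ⬝ᵥ M *ᵥ v = 0 → y ⬝ᵥ M *ᵥ v = 0) : ∃ c : K, c • x = y := by
  simp only [dotProduct_mulVec] at h
  obtain ⟨c, hc⟩ := exists_smul_eq_of_forall_dotProduct_eq_zero h
  refine ⟨c, sub_eq_zero.mp (hM.eq_zero_of_vecMul_eq_zero ?_)⟩
  rw [sub_vecMul, smul_vecMul, hc, sub_self]

namespace Matrix

variable {l R : Type*} [Fintype l] [DecidableEq l] [CommRing R]

theorem dotProduct_J_mulVec_self (v : l ⊕ l → R) : v ⬝ᵥ J l R *ᵥ v = 0 := by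
  simp [J, dotProduct, Fintype.sum_sum_type, fromBlocks_mulVec, mul_comm, neg_mulVec]

def symplecticTransvection (v : l ⊕ l → R) : Matrix (l ⊕ l) (l ⊕ l) R :=
  1 + vecMulVec (J l R *ᵥ v) v

theorem vecMul_symplecticTransvection (u v : l ⊕ l → R) :
    u ᵥ* symplecticTransvection v = u + (u ⬝ᵥ J l R *ᵥ v) • v := by
  rw [symplecticTransvection, vecMul_add, vecMul_one, vecMul_vecMulVec]

theorem symplecticTransvection_mem (v : l ⊕ l → R) :
    symplecticTransvection v ∈ symplecticGroup l R := by
  rw [SymplecticGroup.mem_iff, symplecticTransvection]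
  have hvJ : v ᵥ* J l R = -(J l R *ᵥ v) := by rw [← mulVec_transpose, J_transpose, neg_mulVec]
  have hJv : J l R *ᵥ v ⬝ᵥ v = 0 := by rw [dotProduct_comm, dotProduct_J_mulVec_self]
  simp only [transpose_add, transpose_one, transpose_vecMulVec, add_mul, mul_add, one_mul,
    mul_one, vecMulVec_mul, hvJ, mul_vecMulVec, vecMulVec_mulVec]
  simp [hJv]

theorem separatingLeft_J {K : Type*} [Field K] : (J l K).SeparatingLeft :=
  (nondegenerate_of_det_ne_zero (isUnit_det_J l K).ne_zero).separatingLeft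

end Matrix

theorem symplectic_stabilizer_fixed_points_general
    (F : Type*) [Field F] (N : ℕ)
    (x : (Fin N ⊕ Fin N) → F) (y : (Fin N ⊕ Fin N) → F) :
    (∀ g ∈ Matrix.symplecticGroup (Fin N) F,
        Matrix.vecMul x g = x → Matrix.vecMul y g = y) ↔
      ∃ c : F, y = c • x := by
  refine ⟨fun hfix => ?_, ?_⟩
  · suffices h : ∀ v, x ⬝ᵥ J (Fin N) F *ᵥ v = 0 → y ⬝ᵥ J (Fin N) F *ᵥ v = 0 by
      obtain ⟨c, hc⟩ := separatingLeft_J.exists_smul_eq h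
      exact ⟨c, hc.symm⟩
    intro v hxv
    have hx : x ᵥ* symplecticTransvection v = x := by
      rw [vecMul_symplecticTransvection, hxv, zero_smul, add_zero]
    have hy := hfix _ (symplecticTransvection_mem v) hx
    rw [vecMul_symplecticTransvection, add_eq_left, smul_eq_zero] at hy
    rcases hy with hyv | rfl
    · exact hyv
    · simp
  · rintro ⟨c, rfl⟩ g _ hg
    rw [smul_vecMul, hg]

/-- For a finite field `F` of characteristic 2 and a nonzero row vector `x ∈ F^{2N}`, the
common fixed points of the stabilizer of `x` in the symplectic group `Sp_{2N}(F)` (acting on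
row vectors by right multiplication) form exactly the line `F·x`. -/
theorem symplectic_stabilizer_fixed_points
    (F : Type*) [Field F] [Fintype F] [CharP F 2] (N : ℕ) (hN : 0 < N)
    (x : (Fin N ⊕ Fin N) → F) (hx : x ≠ 0) (y : (Fin N ⊕ Fin N) → F) :
    (∀ g ∈ Matrix.symplecticGroup (Fin N) F,
        Matrix.vecMul x g = x → Matrix.vecMul y g = y) ↔
      ∃ c : F, y = c • x :=
  symplectic_stabilizer_fixed_points_general F N x y
end
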